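/- arXiv:1801.07096 — 3 statements merged into one kernel-verified Lean document; each statement's English description precedes it below -/
import Mathlib

section
/- Let c > 0 and h_T > 0, let C : ℝ₊ → ℝ₊ be any function, and let H_1, ..., H_m be reals with C(H_m) > C(h_T). Define for 2 ≤ k ≤ m: u_k := Σ_{i=k}^{m} (min(C(h_T) - c, C(H_{i-1})) - C(H_i)). Then max over k in {2,...,m} of u_k ≤ -c. -/
open Finset

theorem sum_Icc_min_sub_le {α : Type*} [AddCommGroup α] [LinearOrder α] [IsOrderedAddMonoid α]
    (a : α) (x : ℕ → α) {k m : ℕ} (hkm : k ≤ m) :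
    ∑ i ∈ Icc k m, (min a (x (i - 1)) - x i) ≤ a - x m := by
  induction m, hkm using Nat.le_induction with
  | base => simp
  | succ n hkn ih =>
    rw [sum_Icc_succ_top (by omega)]
    calc ∑ i ∈ Icc k n, (min a (x (i - 1)) - x i) + (min a (x (n + 1 - 1)) - x (n + 1))
        ≤ (a - x n) + (x n - x (n + 1)) :=
          add_le_add ih (sub_le_sub_right (min_le_right _ _) _)
      _ = a - x (n + 1) := sub_add_sub_cancel _ _ _

theorem stmt5_general (c hT : ℝ)
    (C : ℝ → ℝ)
    (m : ℕ) (H : ℕ → ℝ) (hHm : C hT < C (H m)) :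
    ∀ k, 2 ≤ k → k ≤ m →
      (∑ i ∈ Finset.Icc k m, (min (C hT - c) (C (H (i - 1))) - C (H i))) ≤ -c := by
  intro k _ hkm
  have hsum := sum_Icc_min_sub_le (C hT - c) (fun i => C (H i)) hkm
  linarith

/-- Deterministic chain of inequalities in the BRQ achievability proof: if
`C(H m) > C(h_T)`, then for every `k ∈ {2,…,m}` the unresolved information
`u_k = ∑_{i=k}^m (min(C(h_T)-c, C(H_{i-1})) - C(H_i))` is at most `-c`. -/
theorem stmt5 (c hT : ℝ) (hc : 0 < c) (hhT : 0 < hT)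
    (C : ℝ → ℝ) (hCnonneg : ∀ x, 0 ≤ C x)
    (m : ℕ) (H : ℕ → ℝ) (hHm : C hT < C (H m)) :
    ∀ k, 2 ≤ k → k ≤ m →
      (∑ i ∈ Finset.Icc k m, (min (C hT - c) (C (H (i - 1))) - C (H i))) ≤ -c :=
  stmt5_general c hT C m H hHm
end

section
/- Let C : [0,∞) → [0,∞) be a random variable (rate) with CDF F_C having density P_C, and define C̄(r) := ∫₀^r x·P_C(x) dx. Fix λ > 0 and set A := sup_{r ≥ 0} { r + (C̄(r) - λ·F_C(r)) / (1 - F_C(r)) }, assuming the supremum is attained at some r_A with F_C(r_A) < 1. Then for every u ∈ [0, r_A], the function V(u) := A - u satisfies the Bellman equation V(u) = max_{r ≥ 0} { r + E[ 1{C ≤ u+r}·( V(u + r - C) - λ ) ] }. -/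
open MeasureTheory

set_option maxHeartbeats 2000000 in
/-- Verification of the Bellman equation in the dynamic-programming converse:
with `A = max_{r ≥ 0} { r + (C̄(r) - λ F_C(r))/(1 - F_C(r)) }` attained at `r_A` with
`F_C(r_A) < 1`, the affine value function `V(u) = A - u` satisfies, for every
`u ∈ [0, r_A]`,
`V(u) = max_{r ≥ 0} { r + E[1{C ≤ u+r}(V(u+r-C) - λ)] }`,
where the expectation is written via the density `P_C`. -/
theorem stmt9 (lam : ℝ) (hlam : 0 < lam)
    (P F : ℝ → ℝ) (hPnonneg : ∀ x, 0 ≤ P x)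
    (hF : ∀ r, F r = ∫ x in (0 : ℝ)..r, P x)
    (Cbar : ℝ → ℝ) (hCbar : ∀ r, Cbar r = ∫ x in (0 : ℝ)..r, x * P x)
    (A rA : ℝ) (hrA : 0 ≤ rA) (hFrA : F rA < 1)
    (hA : IsGreatest ((fun r => r + (Cbar r - lam * F r) / (1 - F r)) '' Set.Ici 0) A)
    (hArA : A = rA + (Cbar rA - lam * F rA) / (1 - F rA)) :
    ∀ u ∈ Set.Icc 0 rA,
      IsGreatest
        ((fun r => r + ∫ x in (0 : ℝ)..(u + r), P x * ((A - (u + r - x)) - lam)) ''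
          Set.Ici 0)
        (A - u) := by
  -- upper bound hypothesis, pointwise
  have hub : ∀ t : ℝ, 0 ≤ t → t + (Cbar t - lam * F t) / (1 - F t) ≤ A := by
    intro t ht
    exact hA.2 (Set.mem_image_of_mem _ ht)
  -- Step 0 : P is interval integrable on [0,s] for all s ≥ 0
  have hIntP : ∀ s : ℝ, 0 ≤ s → IntervalIntegrable P volume 0 s := by
    intro s hs
    by_contra hni
    set t := max s (|A| + 1) with ht
    have hts : s ≤ t := le_max_left _ _
    have ht0 : 0 ≤ t := hs.trans hts
    have hnit : ¬ IntervalIntegrable P volume 0 t := by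
      intro h
      refine hni (h.mono_set ?_)
      rw [Set.uIcc_of_le hs, Set.uIcc_of_le ht0]
      exact Set.Icc_subset_Icc le_rfl hts
    have hFt : F t = 0 := by
      rw [hF]; exact intervalIntegral.integral_undef hnit
    have hCt : 0 ≤ Cbar t := by
      rw [hCbar]
      exact intervalIntegral.integral_nonneg ht0
        (fun u hu => mul_nonneg hu.1 (hPnonneg u))
    have h1 := hub t ht0
    rw [hFt] at h1
    simp only [mul_zero, sub_zero, div_one] at h1
    have h2 : |A| + 1 ≤ t := le_max_right _ _
    have h3 := le_abs_self A
    linarith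
  have hIntP' : ∀ a b : ℝ, 0 ≤ a → a ≤ b → IntervalIntegrable P volume a b := by
    intro a b ha hab
    refine (hIntP b (ha.trans hab)).mono_set ?_
    rw [Set.uIcc_of_le hab, Set.uIcc_of_le (ha.trans hab)]
    exact Set.Icc_subset_Icc ha le_rfl
  -- integrability of x * P x
  have hIntX : ∀ s : ℝ, 0 ≤ s → IntervalIntegrable (fun x => x * P x) volume 0 s := by
    intro s hs
    rw [intervalIntegrable_iff_integrableOn_Ioc_of_le hs]
    have hP' : IntegrableOn P (Set.Ioc 0 s) volume := by
      have := hIntP s hs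
      rwa [intervalIntegrable_iff_integrableOn_Ioc_of_le hs] at this
    refine Integrable.mono' (hP'.const_mul s) ?_ ?_
    · exact aestronglyMeasurable_id.mul hP'.aestronglyMeasurable
    · filter_upwards [ae_restrict_mem measurableSet_Ioc] with x hx
      rw [Real.norm_eq_abs, abs_mul, abs_of_nonneg (le_of_lt hx.1),
        abs_of_nonneg (hPnonneg x)]
      exact mul_le_mul_of_nonneg_right hx.2 (hPnonneg x)
  have hIntX' : ∀ a b : ℝ, 0 ≤ a → a ≤ b →
      IntervalIntegrable (fun x => x * P x) volume a b := by
    intro a b ha hab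
    refine (hIntX b (ha.trans hab)).mono_set ?_
    rw [Set.uIcc_of_le hab, Set.uIcc_of_le (ha.trans hab)]
    exact Set.Icc_subset_Icc ha le_rfl
  -- splitting the integral
  have hSplit : ∀ s : ℝ, 0 ≤ s → ∀ c : ℝ,
      (∫ x in (0:ℝ)..s, P x * (c + x)) = c * F s + Cbar s := by
    intro s hs c
    have h1 : IntervalIntegrable (fun x => c * P x) volume 0 s := (hIntP s hs).const_mul c
    have h2 := hIntX s hs
    have heq : ∀ x : ℝ, P x * (c + x) = c * P x + x * P x := fun x => by ring
    rw [intervalIntegral.integral_congr (g := fun x => c * P x + x * P x)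
      (fun x _ => heq x)]
    rw [intervalIntegral.integral_add h1 h2, intervalIntegral.integral_const_mul,
      hF, hCbar]
  -- monotonicity of F
  have hFmono : ∀ a b : ℝ, 0 ≤ a → a ≤ b → F a ≤ F b := by
    intro a b ha hab
    have hint : IntervalIntegrable P volume a b := hIntP' a b ha hab
    have hadd : F a + ∫ x in a..b, P x = F b := by
      rw [hF, hF]
      exact intervalIntegral.integral_add_adjacent_intervals (hIntP a ha) hint
    have hnn : 0 ≤ ∫ x in a..b, P x :=
      intervalIntegral.integral_nonneg hab (fun u _ => hPnonneg u)
    linarith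
  -- chain inequalities (L4)
  have hChain : ∀ a b : ℝ, 0 ≤ a → a ≤ b →
      a * (F b - F a) ≤ Cbar b - Cbar a ∧ Cbar b - Cbar a ≤ b * (F b - F a) := by
    intro a b ha hab
    have hb : 0 ≤ b := ha.trans hab
    have hintP : IntervalIntegrable P volume a b := hIntP' a b ha hab
    have hintX : IntervalIntegrable (fun x => x * P x) volume a b := hIntX' a b ha hab
    have hFab : F b - F a = ∫ x in a..b, P x := by
      have := intervalIntegral.integral_add_adjacent_intervals (hIntP a ha) hintP
      rw [hF, hF]; linarith
    have hCab : Cbar b - Cbar a = ∫ x in a..b, x * P x := by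
      have := intervalIntegral.integral_add_adjacent_intervals (hIntX a ha) hintX
      rw [hCbar, hCbar]; linarith
    constructor
    · rw [hFab, hCab, ← intervalIntegral.integral_const_mul]
      refine intervalIntegral.integral_mono_on hab (hintP.const_mul a) hintX ?_
      intro x hx
      exact mul_le_mul_of_nonneg_right hx.1 (hPnonneg x)
    · rw [hFab, hCab, ← intervalIntegral.integral_const_mul]
      refine intervalIntegral.integral_mono_on hab hintX (hintP.const_mul b) ?_
      intro x hx
      exact mul_le_mul_of_nonneg_right hx.2 (hPnonneg x)
  -- continuity of F and Cbar on [0, T]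
  have hFcont : ∀ T : ℝ, 0 ≤ T → ContinuousOn F (Set.Icc 0 T) := by
    intro T hT
    have h := intervalIntegral.continuousOn_primitive_interval'
      (hIntP T hT) Set.left_mem_uIcc
    rw [Set.uIcc_of_le hT] at h
    exact h.congr (fun x _ => hF x)
  have hCcont : ∀ T : ℝ, 0 ≤ T → ContinuousOn Cbar (Set.Icc 0 T) := by
    intro T hT
    have h := intervalIntegral.continuousOn_primitive_interval'
      (hIntX T hT) Set.left_mem_uIcc
    rw [Set.uIcc_of_le hT] at h
    exact h.congr (fun x _ => hCbar x)
  -- the relation at rA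
  have h1F : (1 : ℝ) - F rA ≠ 0 := by
    intro h; rw [sub_eq_zero] at h; exact absurd h.symm (ne_of_lt hFrA)
  have hNrA : (A - rA) * (1 - F rA) = Cbar rA - lam * F rA := by
    have h1 : A - rA = (Cbar rA - lam * F rA) / (1 - F rA) := by linarith
    field_simp at h1
    linarith
  -- master inequality
  have hMaster : ∀ s : ℝ, 0 ≤ s → Cbar s - lam * F s ≤ (A - s) * (1 - F s) := by
    intro s hs
    rcases lt_or_ge (F s) 1 with hFs | hFs
    · have h := hub s hs
      have hpos : 0 < 1 - F s := by linarith
      have hdiv : (Cbar s - lam * F s) / (1 - F s) ≤ A - s := by linarith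
      exact (div_le_iff₀ hpos).mp hdiv
    · -- F s ≥ 1 case
      have hrAs : rA < s := by
        by_contra hc
        push_neg at hc
        have := hFmono s rA hs hc
        linarith
      have hs0 : 0 < s := lt_of_le_of_lt hrA hrAs
      set S : Set ℝ := {t | rA ≤ t ∧ t ≤ s ∧ 1 ≤ F t} with hS
      have hSne : S.Nonempty := ⟨s, hrAs.le, le_rfl, hFs⟩
      have hSbdd : BddBelow S := ⟨rA, fun t ht => ht.1⟩
      set s₁ := sInf S with hs₁def
      have hs₁lb : rA ≤ s₁ := le_csInf hSne (fun t ht => ht.1)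
      have hs₁ub : s₁ ≤ s := csInf_le hSbdd ⟨hrAs.le, le_rfl, hFs⟩
      have hs₁0 : 0 ≤ s₁ := hrA.trans hs₁lb
      have hSsub : S ⊆ Set.Icc 0 s := fun t ht => ⟨hrA.trans ht.1, ht.2.1⟩
      -- F s₁ ≥ 1, via continuity and closure
      have hFs₁ge : 1 ≤ F s₁ := by
        have hcw : ContinuousWithinAt F S s₁ :=
          ((hFcont s hs0.le) s₁ ⟨hs₁0, hs₁ub⟩).mono hSsub
        have hcl : s₁ ∈ closure S := csInf_mem_closure hSne hSbdd
        have hmem : F s₁ ∈ closure (F '' S) := hcw.mem_closure_image hcl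
        have himg : F '' S ⊆ Set.Ici 1 := by
          rintro y ⟨t, ht, rfl⟩
          exact ht.2.2
        have := (closure_mono himg) hmem
        rwa [closure_Ici] at this
      have hrAs₁ : rA < s₁ := by
        by_contra hc
        push_neg at hc
        have := hFmono s₁ rA hs₁0 hc
        linarith
      have hFt : ∀ t, rA ≤ t → t < s₁ → F t < 1 := by
        intro t ht1 ht2
        by_contra hc
        push_neg at hc
        have : s₁ ≤ t := csInf_le hSbdd ⟨ht1, le_trans ht2.le hs₁ub, hc⟩
        linarith
      -- left-limit filter at s₁
      have hNB : (nhdsWithin s₁ (Set.Ico 0 s₁)).NeBot := by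
        refine mem_closure_iff_nhdsWithin_neBot.mp ?_
        rw [closure_Ico (ne_of_lt (lt_of_le_of_lt hrA hrAs₁))]
        exact ⟨hs₁0, le_rfl⟩
      have hFtend : Filter.Tendsto F (nhdsWithin s₁ (Set.Ico 0 s₁)) (nhds (F s₁)) :=
        (((hFcont s₁ hs₁0) s₁ ⟨hs₁0, le_rfl⟩).mono Set.Ico_subset_Icc_self)
      have hCtend : Filter.Tendsto Cbar (nhdsWithin s₁ (Set.Ico 0 s₁)) (nhds (Cbar s₁)) :=
        (((hCcont s₁ hs₁0) s₁ ⟨hs₁0, le_rfl⟩).mono Set.Ico_subset_Icc_self)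
      -- F s₁ ≤ 1
      have hFs₁le : F s₁ ≤ 1 := by
        refine le_of_tendsto hFtend ?_
        have hev : ∀ᶠ t in nhdsWithin s₁ (Set.Ico 0 s₁), rA < t := by
          refine Filter.eventually_iff_exists_mem.mpr ?_
          exact ⟨Set.Ioi rA ∩ Set.Ico 0 s₁,
            Filter.inter_mem (nhdsWithin_le_nhds (Ioi_mem_nhds hrAs₁)) self_mem_nhdsWithin,
            fun t ht => ht.1⟩
        filter_upwards [hev, self_mem_nhdsWithin] with t ht1 ht2
        exact (hFt t ht1.le ht2.2).le
      have hFs₁ : F s₁ = 1 := le_antisymm hFs₁le hFs₁ge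
      -- N s₁ ≤ 0
      have hNs₁ : Cbar s₁ - lam * F s₁ ≤ 0 := by
        have hf : Filter.Tendsto (fun t => Cbar t - lam * F t)
            (nhdsWithin s₁ (Set.Ico 0 s₁)) (nhds (Cbar s₁ - lam * F s₁)) :=
          hCtend.sub ((hFtend.const_mul lam))
        have hid : Filter.Tendsto (fun t : ℝ => t)
            (nhdsWithin s₁ (Set.Ico 0 s₁)) (nhds s₁) :=
          Filter.tendsto_id.mono_left nhdsWithin_le_nhds
        have hg : Filter.Tendsto (fun t => (A - t) * (1 - F t))
            (nhdsWithin s₁ (Set.Ico 0 s₁)) (nhds ((A - s₁) * (1 - F s₁))) :=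
          (Filter.Tendsto.sub tendsto_const_nhds hid).mul
            (Filter.Tendsto.sub tendsto_const_nhds hFtend)
        have hle : Cbar s₁ - lam * F s₁ ≤ (A - s₁) * (1 - F s₁) := by
          refine le_of_tendsto_of_tendsto hf hg ?_
          have hev : ∀ᶠ t in nhdsWithin s₁ (Set.Ico 0 s₁), rA < t := by
            refine Filter.eventually_iff_exists_mem.mpr ?_
            exact ⟨Set.Ioi rA ∩ Set.Ico 0 s₁,
              Filter.inter_mem (nhdsWithin_le_nhds (Ioi_mem_nhds hrAs₁)) self_mem_nhdsWithin,
              fun t ht => ht.1⟩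
          filter_upwards [hev, self_mem_nhdsWithin] with t ht1 ht2
          have hlt : F t < 1 := hFt t ht1.le ht2.2
          have hpos : 0 < 1 - F t := by linarith
          have hdiv : (Cbar t - lam * F t) / (1 - F t) ≤ A - t := by
            have := hub t ht2.1
            linarith
          exact (div_le_iff₀ hpos).mp hdiv
        rw [hFs₁] at hle ⊢
        nlinarith [hle]
      -- A ≤ lam
      have hAlam : A ≤ lam := by
        have hch := (hChain rA s₁ hrA hs₁lb).1
        rw [hFs₁] at hch hNs₁
        have he : (A - lam) * (1 - F rA) ≤ 0 := by nlinarith [hch, hNs₁, hNrA]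
        by_contra hc
        push_neg at hc
        have := mul_pos (sub_pos.mpr hc) (sub_pos.mpr hFrA)
        linarith
      rcases eq_or_lt_of_le hFs with hFs1 | hFs1
      · -- F s = 1
        have h₂ := hChain s₁ s hs₁0 hs₁ub
        have hCeq : Cbar s = Cbar s₁ := by
          have hFeq : F s = F s₁ := by rw [hFs₁, ← hFs1]
          rw [hFeq] at h₂
          have h1 := h₂.1
          have h2 := h₂.2
          nlinarith [h1, h2]
        rw [← hFs1, hCeq]
        rw [hFs₁] at hNs₁
        nlinarith [hNs₁]
      · -- F s > 1 : contradiction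
        exfalso
        have h := hub s hs
        have hneg : 1 - F s < 0 := by linarith
        have hdiv : (Cbar s - lam * F s) / (1 - F s) ≤ A - s := by linarith
        have hNs_ge : (A - s) * (1 - F s) ≤ Cbar s - lam * F s := by
          have := (div_le_iff_of_neg hneg).mp hdiv
          linarith
        have h₂2 := (hChain s₁ s hs₁0 hs₁ub).2
        have hNs₁' := hNs₁
        rw [hFs₁] at h₂2 hNs₁'
        have he2 : (lam - A) * (F s - 1) ≤ 0 := by nlinarith [hNs_ge, h₂2, hNs₁']
        have hlamA : lam ≤ A := by
          by_contra hc
          push_neg at hc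
          have := mul_pos (sub_pos.mpr hc) (sub_pos.mpr hFs1)
          linarith
        have hAeq : A = lam := le_antisymm hAlam hlamA
        -- equality case forces F c = F s₁ for c ∈ [s₁, s)
        have hkey : s * (F s - F s₁) ≤ Cbar s - Cbar s₁ := by
          rw [hFs₁]
          nlinarith [hNs_ge, hNs₁', hAeq]
        have hFc : ∀ c, s₁ ≤ c → c < s → F c = F s₁ := by
          intro c hc1 hc2
          have h3 := (hChain s₁ c hs₁0 hc1).2
          have h4 := (hChain c s (hs₁0.trans hc1) hc2.le).2
          have hm1 : F s₁ ≤ F c := hFmono s₁ c hs₁0 hc1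
          have hprod : (s - c) * (F c - F s₁) ≤ 0 := by nlinarith [h3, h4, hkey]
          have hle : F c ≤ F s₁ := by
            by_contra hc'
            push_neg at hc'
            have := mul_pos (sub_pos.mpr hc2) (sub_pos.mpr hc')
            linarith
          exact le_antisymm hle hm1
        -- left limit of F at s equals 1, contradiction with F s > 1
        have hNBs : (nhdsWithin s (Set.Ico 0 s)).NeBot := by
          refine mem_closure_iff_nhdsWithin_neBot.mp ?_
          rw [closure_Ico (ne_of_lt hs0)]
          exact ⟨hs0.le, le_rfl⟩
        have hFtends : Filter.Tendsto F (nhdsWithin s (Set.Ico 0 s)) (nhds (F s)) :=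
          (((hFcont s hs0.le) s ⟨hs0.le, le_rfl⟩).mono Set.Ico_subset_Icc_self)
        have hs₁s : s₁ < s := by
          rcases lt_or_eq_of_le hs₁ub with h' | h'
          · exact h'
          · rw [h'] at hFs₁; linarith
        have hFle : F s ≤ 1 := by
          refine le_of_tendsto hFtends ?_
          have hev : ∀ᶠ t in nhdsWithin s (Set.Ico 0 s), s₁ < t := by
            refine Filter.eventually_iff_exists_mem.mpr ?_
            exact ⟨Set.Ioi s₁ ∩ Set.Ico 0 s,
              Filter.inter_mem (nhdsWithin_le_nhds (Ioi_mem_nhds hs₁s)) self_mem_nhdsWithin,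
              fun t ht => ht.1⟩
          filter_upwards [hev, self_mem_nhdsWithin] with t ht1 ht2
          rw [hFc t ht1.le ht2.2, hFs₁]
        linarith
  -- now the main statement
  intro u hu
  constructor
  · -- membership: r = rA - u
    refine ⟨rA - u, by simp [hu.2], ?_⟩
    show (rA - u) + (∫ x in (0:ℝ)..(u + (rA - u)), P x * ((A - (u + (rA - u) - x)) - lam)) = A - u
    have hval : u + (rA - u) = rA := by ring
    rw [hval]
    have hsp := hSplit rA hrA (A - rA - lam)
    have heq : (∫ x in (0:ℝ)..rA, P x * ((A - (rA - x)) - lam))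
        = (A - rA - lam) * F rA + Cbar rA := by
      rw [← hsp]
      apply intervalIntegral.integral_congr
      intro x _
      ring_nf
    rw [heq]
    linear_combination -hNrA
  · rintro v ⟨r, hr, rfl⟩
    simp only [Set.mem_Ici] at hr
    show r + (∫ x in (0:ℝ)..(u + r), P x * ((A - (u + r - x)) - lam)) ≤ A - u
    have hs : 0 ≤ u + r := by linarith [hu.1]
    have hsp := hSplit (u + r) hs (A - (u + r) - lam)
    have heq : (∫ x in (0:ℝ)..(u + r), P x * ((A - (u + r - x)) - lam))
        = (A - (u + r) - lam) * F (u + r) + Cbar (u + r) := by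
      rw [← hsp]
      apply intervalIntegral.integral_congr
      intro x _
      ring_nf
    rw [heq]
    have hm := hMaster (u + r) hs
    nlinarith [hm]
end

section
/- Let H have the exponential density P_H(h) = (1/Γ)e^{-h/Γ} on [0,∞) with Γ > 0, and define C(h) = (1/2)log₂(1+h). Then for T > 1, with h_T := -Γ·ln(1/T) = Γ·ln T, the BRQ throughput η_BRQ(T) = ∫₀^{h_T} (1/Γ)e^{-h/Γ}·(1/2)log₂(1+h) dh + (1/(2T))·log₂(1 + Γ ln T) is strictly increasing in T. -/
/-!
Write `h_T = F⁻¹(1 - 1/T)` for the quantile of the fading law, so that `p(h_T) h_T' = 1/T²`.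
Differentiating `η(T) = ∫₀^{h_T} p C + C(h_T)/T`, the boundary term of the integral,
`p(h_T) C(h_T) h_T' = C(h_T)/T²`, cancels the derivative of the prefactor `1/T`, leaving
`η'(T) = C'(h_T) h_T' / T`, which is positive because both `C` and `T ↦ h_T` are increasing
(for the exponential law, `h_T = Γ ln T`).
-/

open Real Set intervalIntegral

theorem hasDerivAt_integral_add_one_div_mul {p C h : ℝ → ℝ} {U : Set ℝ} {a T h' c' : ℝ}
    (hU : IsOpen U) (hp : ContinuousOn p U) (hC : ContinuousOn C U) (haU : uIcc a (h T) ⊆ U)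
    (hh : HasDerivAt h h' T) (hC' : HasDerivAt C c' (h T)) (hT : T ≠ 0)
    (hquantile : p (h T) * h' = 1 / T ^ 2) :
    HasDerivAt (fun T => (∫ x in a..h T, p x * C x) + 1 / T * C (h T)) (c' * h' / T) T := by
  have hpC : ContinuousOn (fun x => p x * C x) U := hp.mul hC
  have hhT : h T ∈ U := haU right_mem_uIcc
  have hint : HasDerivAt (fun y => ∫ x in a..y, p x * C x) (p (h T) * C (h T)) (h T) :=
    integral_hasDerivAt_right (hpC.mono haU).intervalIntegrable
      (hpC.stronglyMeasurableAtFilter hU _ hhT) (hpC.continuousAt (hU.mem_nhds hhT))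
  have hinv : HasDerivAt (fun T => 1 / T) (-(T ^ 2)⁻¹) T := by
    simpa only [one_div] using hasDerivAt_inv hT
  refine ((hint.comp T hh).add (hinv.mul (hC'.comp T hh))).congr_deriv ?_
  rw [Function.comp_apply, mul_right_comm, hquantile]
  field_simp
  ring

theorem strictMonoOn_integral_add_one_div_mul {p C h h' c' : ℝ → ℝ} {U : Set ℝ} {a b : ℝ}
    (hb : 0 ≤ b) (hU : IsOpen U) (hp : ContinuousOn p U) (hC : ContinuousOn C U)
    (haU : ∀ T ∈ Ioi b, uIcc a (h T) ⊆ U) (hh : ∀ T ∈ Ioi b, HasDerivAt h (h' T) T)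
    (hC' : ∀ x ∈ U, HasDerivAt C (c' x) x) (hh'_pos : ∀ T ∈ Ioi b, 0 < h' T)
    (hc'_pos : ∀ x ∈ U, 0 < c' x) (hquantile : ∀ T ∈ Ioi b, p (h T) * h' T = 1 / T ^ 2) :
    StrictMonoOn (fun T => (∫ x in a..h T, p x * C x) + 1 / T * C (h T)) (Ioi b) := by
  have hderiv : ∀ T ∈ Ioi b, HasDerivAt (fun T => (∫ x in a..h T, p x * C x) + 1 / T * C (h T))
      (c' (h T) * h' T / T) T := fun T hT =>
    have hhT : h T ∈ U := haU T hT right_mem_uIcc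
    hasDerivAt_integral_add_one_div_mul hU hp hC (haU T hT) (hh T hT) (hC' _ hhT)
      (hb.trans_lt hT).ne' (hquantile T hT)
  refine strictMonoOn_of_hasDerivWithinAt_pos (f' := fun T => c' (h T) * h' T / T)
    (convex_Ioi b) (HasDerivAt.continuousOn hderiv) (fun T hT => ?_) (fun T hT => ?_) <;>
    rw [interior_Ioi] at hT
  · exact (hderiv T hT).hasDerivWithinAt
  · have hT0 : 0 < T := hb.trans_lt hT
    have := hc'_pos _ (haU T hT right_mem_uIcc)
    have := hh'_pos T hT
    positivity

noncomputable def expDensity (Γ x : ℝ) : ℝ := 1 / Γ * exp (-x / Γ)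

noncomputable def awgnCapacity (x : ℝ) : ℝ := 1 / 2 * logb 2 (1 + x)

theorem expDensity_mul_quantile_deriv {Γ T : ℝ} (hΓ : 0 < Γ) (hT : 0 < T) :
    expDensity Γ (Γ * log T) * (Γ * T⁻¹) = 1 / T ^ 2 := by
  have hexp : exp (-(Γ * log T) / Γ) = T⁻¹ := by
    rw [neg_div, mul_div_cancel_left₀ _ hΓ.ne', exp_neg, exp_log hT]
  rw [expDensity, hexp]
  field_simp

theorem continuous_expDensity (Γ : ℝ) : Continuous (expDensity Γ) := by
  unfold expDensity
  fun_prop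

theorem continuousOn_awgnCapacity : ContinuousOn awgnCapacity (Ioi (-1)) := by
  have hpos : ∀ x ∈ Ioi (-1 : ℝ), 1 + x ≠ 0 := fun x hx => by rw [mem_Ioi] at hx; linarith
  unfold awgnCapacity logb
  fun_prop (disch := exact hpos)

theorem hasDerivAt_awgnCapacity {x : ℝ} (hx : -1 < x) :
    HasDerivAt awgnCapacity (1 / (2 * (1 + x) * log 2)) x := by
  have hlog := ((hasDerivAt_id' x).const_add 1).log (by linarith)
  unfold awgnCapacity logb
  refine ((hlog.div_const (log 2)).const_mul (1 / 2)).congr_deriv ?_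
  field_simp

/-- For the exponential (Rayleigh-power) density with mean `Γ > 0`, the BRQ throughput
`η_BRQ(T) = ∫₀^{Γ ln T} (1/Γ)e^{-h/Γ}·(1/2)log₂(1+h) dh + (1/(2T))·log₂(1 + Γ ln T)`
is strictly increasing in `T` on `(1, ∞)`. -/
theorem stmt19 (Γ : ℝ) (hΓ : 0 < Γ) :
    StrictMonoOn
      (fun T : ℝ =>
        (∫ h in (0 : ℝ)..(Γ * Real.log T),
            (1 / Γ) * Real.exp (-h / Γ) * ((1 / 2) * Real.logb 2 (1 + h))) +
          (1 / (2 * T)) * Real.logb 2 (1 + Γ * Real.log T))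
      (Set.Ioi 1) := by
  convert strictMonoOn_integral_add_one_div_mul (p := expDensity Γ) (C := awgnCapacity)
    (h := fun T => Γ * log T) (h' := fun T => Γ * T⁻¹) zero_le_one isOpen_Ioi
    (continuous_expDensity Γ).continuousOn continuousOn_awgnCapacity ?_
    (fun T hT => (hasDerivAt_log (zero_lt_one.trans (mem_Ioi.mp hT)).ne').const_mul Γ)
    (fun x hx => hasDerivAt_awgnCapacity hx) ?_ ?_
    (fun T hT => expDensity_mul_quantile_deriv hΓ (zero_lt_one.trans (mem_Ioi.mp hT))) using 1
  · funext T
    simp only [expDensity, awgnCapacity]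
    ring
  · intro T hT
    rw [uIcc_of_le (mul_pos hΓ (log_pos hT)).le]
    exact fun x hx => show -1 < x by linarith [hx.1]
  · exact fun T hT => mul_pos hΓ (inv_pos.mpr (zero_lt_one.trans (mem_Ioi.mp hT)))
  · intro x hx
    have : 0 < 1 + x := by rw [mem_Ioi] at hx; linarith
    have := log_pos one_lt_two
    positivity
end
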